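/- arXiv:1302.3632 — 3 statements merged into one kernel-verified Lean document; each statement's English description precedes it below -/
import Mathlib

section
/- Suppose α > −1, γ > −1 and β ∈ ℝ. Then there exists a constant C > 0 such that for every integer n ≥ 2, the integral ∫₀¹ t^α (1−t)^{n+γ} (1+t)^{β−n} dt can be written as (2n)^{−α−1} Γ(α+1) (1 + ε_n) with |ε_n| ≤ C/n. In particular ∫₀¹ t^α (1−t)^{n+γ} (1+t)^{β−n} dt = (2n)^{−α−1} Γ(α+1) (1 + O(1/n)) as n → ∞. -/
/-!
The substitution `t = u / (2 - u)` turns the integral into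
`2 ^ (γ + β + 1) * ∫₀¹ u ^ α (1 - u) ^ (n + γ) (2 - u) ^ (-c)` with `c = α + γ + β + 2`, which no
longer depends on `n`. Replacing the smooth factor `(2 - u) ^ (-c)` by its value `2 ^ (-c)` at
`u = 0` costs an error `O(u)`, and multiplying the Beta weight by `u` scales the Beta integral
by `(α + 1) / (n + α + γ + 2)`: the relative error is `O(1/n)`. The remaining Beta integral is
`Γ(α + 1) Γ(n + γ + 1) / Γ(n + γ + α + 2)`, and log-convexity of `Γ` squeezes `Γ(x + a) / Γ(x)`
between `(x - 1) ^ a` and `(x + a) ^ a`, so this is `Γ(α + 1) n ^ (-α - 1) (1 + O(1/n))`.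
-/

open Real MeasureTheory Set

lemma ofReal_cpow_mul_one_sub_cpow {x : ℝ} (hx : x ∈ Icc (0:ℝ) 1) (p q : ℝ) :
    (x : ℂ) ^ (p : ℂ) * (1 - (x : ℂ)) ^ (q : ℂ) = ((x ^ p * (1 - x) ^ q : ℝ) : ℂ) := by
  rw [Complex.ofReal_mul, Complex.ofReal_cpow hx.1, Complex.ofReal_cpow (sub_nonneg.2 hx.2)]
  push_cast
  rfl

lemma betaIntegral_ofReal_add_one (p q : ℝ) :
    Complex.betaIntegral (p + 1) (q + 1) = ((∫ x in Ioo (0:ℝ) 1, x ^ p * (1 - x) ^ q : ℝ) : ℂ) := by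
  rw [Complex.betaIntegral, intervalIntegral.integral_of_le zero_le_one,
    integral_Ioc_eq_integral_Ioo]
  refine (setIntegral_congr_fun measurableSet_Ioo fun x hx => ?_).trans integral_ofReal
  simp only [add_sub_cancel_right]
  exact ofReal_cpow_mul_one_sub_cpow (Ioo_subset_Icc_self hx) p q

lemma integrableOn_rpow_mul_one_sub_rpow {p q : ℝ} (hp : -1 < p) (hq : -1 < q) :
    IntegrableOn (fun x : ℝ => x ^ p * (1 - x) ^ q) (Ioo 0 1) := by
  have h := Complex.betaIntegral_convergent (u := p + 1) (v := q + 1)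
    (by simpa using neg_lt_iff_pos_add.mp hp) (by simpa using neg_lt_iff_pos_add.mp hq)
  rw [intervalIntegrable_iff_integrableOn_Ioc_of_le zero_le_one] at h
  refine IntegrableOn.congr_fun (h.mono_set Ioo_subset_Ioc_self).re (fun x hx => ?_)
    measurableSet_Ioo
  simp only [add_sub_cancel_right]
  rw [ofReal_cpow_mul_one_sub_cpow (Ioo_subset_Icc_self hx), RCLike.re_to_complex,
    Complex.ofReal_re]

lemma integral_rpow_mul_one_sub_rpow {p q : ℝ} (hp : -1 < p) (hq : -1 < q) :
    ∫ x in Ioo (0:ℝ) 1, x ^ p * (1 - x) ^ q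
      = Gamma (p + 1) * Gamma (q + 1) / Gamma (p + q + 2) := by
  have hp' : 0 < p + 1 := by linarith
  have hq' : 0 < q + 1 := by linarith
  have h := Complex.Gamma_mul_Gamma_eq_betaIntegral (s := (p + 1 : ℝ)) (t := (q + 1 : ℝ))
    (by simpa using hp') (by simpa using hq')
  rw [← Complex.ofReal_add, Complex.Gamma_ofReal, Complex.Gamma_ofReal, Complex.Gamma_ofReal]
    at h
  push_cast at h
  rw [betaIntegral_ofReal_add_one] at h
  norm_cast at h
  rw [eq_div_iff (Gamma_pos_of_pos (by linarith)).ne', h, mul_comm]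
  ring_nf

lemma integral_rpow_add_one_mul_one_sub_rpow {p q : ℝ} (hp : -1 < p) (hq : -1 < q) :
    ∫ x in Ioo (0:ℝ) 1, x ^ (p + 1) * (1 - x) ^ q
      = (p + 1) / (p + q + 2) * ∫ x in Ioo (0:ℝ) 1, x ^ p * (1 - x) ^ q := by
  rw [integral_rpow_mul_one_sub_rpow hp hq, integral_rpow_mul_one_sub_rpow (by linarith) hq,
    Gamma_add_one (s := p + 1) (by linarith), show p + 1 + q + 2 = (p + q + 2) + 1 by ring,
    Gamma_add_one (s := p + q + 2) (by linarith)]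
  have : 0 < Gamma (p + q + 2) := Gamma_pos_of_pos (by linarith)
  field_simp

lemma image_div_two_sub_Ioo : (fun u : ℝ => u / (2 - u)) '' Ioo 0 1 = Ioo 0 1 := by
  ext t
  constructor
  · rintro ⟨u, ⟨hu0, hu1⟩, rfl⟩
    exact ⟨div_pos hu0 (by linarith), (div_lt_one (by linarith)).2 (by linarith)⟩
  · rintro ⟨ht0, ht1⟩
    refine ⟨2 * t / (1 + t), ⟨by positivity, (div_lt_one (by linarith)).2 (by linarith)⟩, ?_⟩
    have : 1 + t ≠ 0 := by linarith
    field_simp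
    ring

lemma integral_rpow_mul_one_sub_rpow_mul_one_add_rpow (p q r : ℝ) :
    ∫ t in Ioo (0:ℝ) 1, t ^ p * (1 - t) ^ q * (1 + t) ^ r
      = 2 ^ (q + r + 1)
        * ∫ u in Ioo (0:ℝ) 1, u ^ p * (1 - u) ^ q * (2 - u) ^ (-(p + q + r) - 2) := by
  set φ : ℝ → ℝ := fun u => u / (2 - u)
  have hderiv : ∀ u ∈ Ioo (0:ℝ) 1, HasDerivWithinAt φ (2 / (2 - u) ^ 2) (Ioo 0 1) u := by
    intro u hu
    have h2u : 2 - u ≠ 0 := by linarith [hu.2]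
    refine (((hasDerivAt_id u).div ((hasDerivAt_id u).const_sub 2) h2u).congr_deriv ?_)
      |>.hasDerivWithinAt
    simp only [id]
    field_simp
    ring
  have hinj : InjOn φ (Ioo 0 1) := by
    intro u hu v hv h
    rw [div_eq_div_iff (by linarith [hu.2]) (by linarith [hv.2])] at h
    linarith
  conv_lhs => rw [← image_div_two_sub_Ioo]
  rw [integral_image_eq_integral_abs_deriv_smul measurableSet_Ioo hderiv hinj,
    ← integral_const_mul]
  refine setIntegral_congr_fun measurableSet_Ioo fun u hu => ?_
  obtain ⟨hu0, hu1⟩ := hu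
  have h2u : 0 < 2 - u := by linarith
  have h1u : 0 < 1 - u := by linarith
  have h1φ : 1 - φ u = 2 * (1 - u) / (2 - u) := by simp only [φ]; field_simp; ring
  have h2φ : 1 + φ u = 2 / (2 - u) := by simp only [φ]; field_simp; ring
  simp only [smul_eq_mul]
  rw [h1φ, h2φ, abs_of_pos (by positivity), div_rpow hu0.le h2u.le,
    div_rpow (by positivity) h2u.le, div_rpow zero_le_two h2u.le, mul_rpow zero_le_two h1u.le,
    show -(p + q + r) - 2 = -p + (-q + (-r + -2)) by ring, rpow_add h2u, rpow_add h2u,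
    rpow_add h2u, show q + r + 1 = q + (r + 1) by ring, rpow_add two_pos, rpow_add two_pos,
    rpow_neg h2u.le, rpow_neg h2u.le, rpow_neg h2u.le, rpow_neg h2u.le, rpow_one,
    show (2:ℝ) = (2:ℕ) by norm_num, rpow_natCast]
  field_simp

lemma ContDiffOn.exists_abs_integral_rpow_mul_one_sub_rpow_mul_sub_le {p : ℝ} (hp : -1 < p)
    {h : ℝ → ℝ} (hh : ContDiffOn ℝ 1 h (Icc 0 1)) :
    ∃ L, 0 ≤ L ∧ ∀ q, -1 < q →
      |(∫ u in Ioo (0:ℝ) 1, u ^ p * (1 - u) ^ q * h u)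
          - h 0 * ∫ u in Ioo (0:ℝ) 1, u ^ p * (1 - u) ^ q|
        ≤ L / (p + q + 2) * ∫ u in Ioo (0:ℝ) 1, u ^ p * (1 - u) ^ q := by
  obtain ⟨K, hK⟩ := hh.exists_lipschitzOnWith one_ne_zero (convex_Icc 0 1) isCompact_Icc
  refine ⟨K * (p + 1), mul_nonneg K.2 (by linarith), fun q hq => ?_⟩
  have hf := integrableOn_rpow_mul_one_sub_rpow hp hq
  have hfh := hf.mul_continuousOn_of_subset hh.continuousOn measurableSet_Ioo isCompact_Icc
    Ioo_subset_Icc_self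
  rw [← integral_const_mul, ← integral_sub hfh (hf.const_mul (h 0)), mul_div_assoc, mul_assoc,
    ← integral_rpow_add_one_mul_one_sub_rpow hp hq, ← integral_const_mul, ← Real.norm_eq_abs]
  refine norm_integral_le_of_norm_le
    ((integrableOn_rpow_mul_one_sub_rpow (by linarith) hq).const_mul (K : ℝ))
    (ae_restrict_of_forall_mem measurableSet_Ioo fun u hu => ?_)
  have hu' := Ioo_subset_Icc_self hu
  have hlip : |h u - h 0| ≤ K * u := by
    simpa [Real.dist_eq, abs_of_nonneg hu'.1] using
      hK.dist_le_mul u hu' 0 (left_mem_Icc.2 zero_le_one)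
  have hf0 : 0 ≤ u ^ p * (1 - u) ^ q :=
    mul_nonneg (rpow_nonneg hu'.1 _) (rpow_nonneg (sub_nonneg.2 hu'.2) _)
  calc ‖u ^ p * (1 - u) ^ q * h u - h 0 * (u ^ p * (1 - u) ^ q)‖
      = u ^ p * (1 - u) ^ q * |h u - h 0| := by
        rw [mul_comm (h 0), ← mul_sub, Real.norm_eq_abs, abs_mul,
          abs_of_nonneg hf0]
    _ ≤ u ^ p * (1 - u) ^ q * (K * u) := by gcongr
    _ = K * (u ^ (p + 1) * (1 - u) ^ q) := by rw [rpow_add_one hu.1.ne']; ring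

lemma ContDiffOn.exists_abs_integral_div_sub_one_le {p : ℝ} (hp : -1 < p) {h : ℝ → ℝ}
    (hh : ContDiffOn ℝ 1 h (Icc 0 1)) (h0 : 0 < h 0) :
    ∃ L, 0 ≤ L ∧ ∀ q, -1 < q →
      |(∫ u in Ioo (0:ℝ) 1, u ^ p * (1 - u) ^ q * h u)
          / (h 0 * ∫ u in Ioo (0:ℝ) 1, u ^ p * (1 - u) ^ q) - 1| ≤ L / (p + q + 2) := by
  obtain ⟨L, hL, hint⟩ := hh.exists_abs_integral_rpow_mul_one_sub_rpow_mul_sub_le hp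
  refine ⟨L / h 0, div_nonneg hL h0.le, fun q hq => ?_⟩
  have hB : 0 < ∫ u in Ioo (0:ℝ) 1, u ^ p * (1 - u) ^ q := by
    rw [integral_rpow_mul_one_sub_rpow hp hq]
    exact div_pos (mul_pos (Gamma_pos_of_pos (by linarith)) (Gamma_pos_of_pos (by linarith)))
      (Gamma_pos_of_pos (by linarith))
  have hB' := mul_pos h0 hB
  rw [div_sub_one hB'.ne', abs_div, abs_of_pos hB', div_le_iff₀ hB']
  calc _ ≤ L / (p + q + 2) * ∫ u in Ioo (0:ℝ) 1, u ^ p * (1 - u) ^ q := hint q hq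
    _ = L / h 0 / (p + q + 2) * (h 0 * ∫ u in Ioo (0:ℝ) 1, u ^ p * (1 - u) ^ q) := by
      field_simp

lemma Gamma_add_div_Gamma_mem_Icc {x a : ℝ} (hx : 1 < x) (ha : 0 < a) :
    Gamma (x + a) / Gamma x ∈ Icc ((x - 1) ^ a) ((x + a) ^ a) := by
  obtain ⟨y, rfl⟩ : ∃ y, x = y + 1 := ⟨x - 1, by ring⟩
  have hy : 0 < y := by linarith
  set f : ℝ → ℝ := log ∘ Gamma
  have hf : ConvexOn ℝ (Ioi 0) f := convexOn_log_Gamma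
  have hstep : ∀ z, 0 < z → f (z + 1) - f z = log z := fun z hz => by
    simp only [f, Function.comp, Gamma_add_one hz.ne',
      log_mul hz.ne' (Gamma_pos_of_pos hz).ne', add_sub_cancel_right]
  have hlo := hf.slope_mono_adjacent (x := y) (y := y + 1) (z := y + 1 + a)
    (mem_Ioi.2 hy) (mem_Ioi.2 (by linarith)) (by linarith) (by linarith)
  have hhi := hf.slope_mono_adjacent (x := y + 1) (y := y + 1 + a) (z := y + 1 + a + 1)
    (mem_Ioi.2 (by linarith)) (mem_Ioi.2 (by linarith)) (by linarith) (by linarith)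
  simp only [add_sub_cancel_left, div_one, hstep _ hy, hstep (y + 1 + a) (by linarith)] at hlo hhi
  rw [le_div_iff₀ ha] at hlo
  rw [div_le_iff₀ ha] at hhi
  have hG := Gamma_pos_of_pos (by linarith : 0 < y + 1)
  have hGa := Gamma_pos_of_pos (by linarith : 0 < y + 1 + a)
  rw [← exp_log (div_pos hGa hG), log_div hGa.ne' hG.ne', rpow_def_of_pos (by linarith),
    rpow_def_of_pos (by linarith), add_sub_cancel_right]
  exact ⟨exp_le_exp.2 hlo, exp_le_exp.2 hhi⟩

lemma exists_abs_rpow_mul_Gamma_div_Gamma_sub_one_le {d a : ℝ} (hd : 0 < d) (ha : 0 < a) :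
    ∃ K, 0 ≤ K ∧ ∀ y : ℝ, 2 ≤ y → |y ^ a * Gamma (y + d) / Gamma (y + d + a) - 1| ≤ K / y := by
  obtain ⟨K₀, hK₀⟩ : ∃ K, LipschitzOnWith K (fun t : ℝ => t ^ (-a)) (Icc (1 / 2) (1 + d + a)) :=
    (contDiffOn_id.rpow_const_of_ne fun t ht => (by linarith [ht.1] : t ≠ 0)).exists_lipschitzOnWith
      one_ne_zero (convex_Icc _ _) isCompact_Icc
  have hnear : ∀ t ∈ Icc (1 / 2 : ℝ) (1 + d + a), |t ^ (-a) - 1| ≤ K₀ * |t - 1| := fun t ht => by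
    simpa [Real.dist_eq] using hK₀.dist_le_mul t ht 1 ⟨by norm_num, by linarith⟩
  refine ⟨K₀ * (d + a + |d - 1|), mul_nonneg K₀.2 (by positivity), fun y hy => ?_⟩
  have hy0 : 0 < y := by linarith
  have hpow : ∀ z, 0 < z → y ^ a / z ^ a = (z / y) ^ (-a) := fun z hz => by
    rw [rpow_neg (div_pos hz hy0).le, div_rpow hz.le hy0.le, inv_div]
  have h₁ : |((y + d + a) / y) ^ (-a) - 1| ≤ K₀ * ((d + a) / y) := by
    have := hnear ((y + d + a) / y) ⟨?_, ?_⟩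
    · rwa [show (y + d + a) / y - 1 = (d + a) / y by field_simp; ring,
        abs_of_pos (a := (d + a) / y) (div_pos (by linarith) hy0)] at this
    · rw [le_div_iff₀ hy0]; linarith
    · rw [div_le_iff₀ hy0]; nlinarith
  have h₂ : |((y + (d - 1)) / y) ^ (-a) - 1| ≤ K₀ * (|d - 1| / y) := by
    have := hnear ((y + (d - 1)) / y) ⟨?_, ?_⟩
    · rwa [show (y + (d - 1)) / y - 1 = (d - 1) / y by field_simp; ring, abs_div,
        abs_of_pos hy0] at this
    · rw [le_div_iff₀ hy0]; linarith
    · rw [div_le_iff₀ hy0]; nlinarith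
  obtain ⟨hlo, hhi⟩ := Gamma_add_div_Gamma_mem_Icc (x := y + d) (by linarith) ha
  have hR : y ^ a * Gamma (y + d) / Gamma (y + d + a)
      = y ^ a / (Gamma (y + d + a) / Gamma (y + d)) := (div_div_eq_mul_div _ _ _).symm
  have hlo' : ((y + d + a) / y) ^ (-a) ≤ y ^ a * Gamma (y + d) / Gamma (y + d + a) := by
    rw [hR, ← hpow _ (by linarith)]
    exact div_le_div_of_nonneg_left (rpow_nonneg hy0.le a)
      ((rpow_pos_of_pos (by linarith) a).trans_le hlo) hhi
  have hhi' : y ^ a * Gamma (y + d) / Gamma (y + d + a) ≤ ((y + (d - 1)) / y) ^ (-a) := by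
    rw [hR, ← hpow _ (by linarith), ← add_sub_assoc]
    exact div_le_div_of_nonneg_left (rpow_nonneg hy0.le a) (rpow_pos_of_pos (by linarith) a) hlo
  have hsplit : K₀ * (d + a + |d - 1|) / y = K₀ * ((d + a) / y) + K₀ * (|d - 1| / y) := by ring
  have h₁' : 0 ≤ K₀ * ((d + a) / y) := mul_nonneg K₀.2 (div_nonneg (by linarith) hy0.le)
  have h₂' : 0 ≤ K₀ * (|d - 1| / y) := mul_nonneg K₀.2 (div_nonneg (abs_nonneg _) hy0.le)
  rw [abs_le] at h₁ h₂ ⊢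
  constructor <;> linarith

lemma abs_mul_sub_one_le {A B a b y : ℝ} (hy : 1 ≤ y) (ha : 0 ≤ a) (hb : 0 ≤ b)
    (hA : |A - 1| ≤ a / y) (hB : |B - 1| ≤ b / y) : |A * B - 1| ≤ (a + b + a * b) / y := by
  have hy0 : 0 < y := by linarith
  have hab : a / y * (b / y) ≤ a * b / y := by
    rw [div_mul_div_comm]
    exact div_le_div_of_nonneg_left (mul_nonneg ha hb) hy0 (by nlinarith)
  calc |A * B - 1| = |(A - 1) + (B - 1) + (A - 1) * (B - 1)| := by ring_nf
    _ ≤ |A - 1| + |B - 1| + |A - 1| * |B - 1| := by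
        rw [← abs_mul]; exact (abs_add_le _ _).trans (by gcongr; exact abs_add_le _ _)
    _ ≤ a / y + b / y + a / y * (b / y) := by gcongr
    _ ≤ (a + b + a * b) / y := by rw [add_div, add_div]; linarith

/-- For α > −1, γ > −1, β ∈ ℝ, there exists C > 0 such that for every n ≥ 2,
∫₀¹ t^α (1−t)^{n+γ} (1+t)^{β−n} dt = (2n)^{−α−1} Γ(α+1) (1 + ε) with |ε| ≤ C/n. -/
theorem statement0 (α γ β : ℝ) (hα : α > -1) (hγ : γ > -1) :
    ∃ C : ℝ, C > 0 ∧ ∀ n : ℕ, 2 ≤ n → ∃ ε : ℝ,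
      (∫ t in Set.Ioo (0:ℝ) 1, t ^ α * (1 - t) ^ ((n : ℝ) + γ) * (1 + t) ^ (β - (n : ℝ)))
        = (2 * (n : ℝ)) ^ (-α - 1) * Real.Gamma (α + 1) * (1 + ε)
      ∧ |ε| ≤ C / (n : ℝ) := by
  set c := α + γ + β + 2
  have hh : ContDiffOn ℝ 1 (fun u : ℝ => (2 - u) ^ (-c)) (Icc 0 1) :=
    (contDiffOn_const.sub contDiffOn_id).rpow_const_of_ne fun u hu => by
      simp only [id]; linarith [hu.2]
  obtain ⟨L, hL, hJ⟩ := hh.exists_abs_integral_div_sub_one_le hα (by positivity)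
  obtain ⟨K, hK, hΓ⟩ := exists_abs_rpow_mul_Gamma_div_Gamma_sub_one_le
    (d := γ + 1) (a := α + 1) (by linarith) (by linarith)
  refine ⟨L + K + L * K + 1, by positivity, fun n hn => ?_⟩
  have hn : (2:ℝ) ≤ n := by exact_mod_cast hn
  simp only [sub_zero] at hJ
  rw [integral_rpow_mul_one_sub_rpow_mul_one_add_rpow, show n + γ + (β - n) + 1 = γ + β + 1 by ring,
    show -(α + (n + γ) + (β - n)) - 2 = -c by ring]
  set B := ∫ u in Ioo (0:ℝ) 1, u ^ α * (1 - u) ^ ((n:ℝ) + γ)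
  set J := ∫ u in Ioo (0:ℝ) 1, u ^ α * (1 - u) ^ ((n:ℝ) + γ) * (2 - u) ^ (-c)
  have hJB : |J / (2 ^ (-c) * B) - 1| ≤ L / n :=
    (hJ _ (by linarith)).trans (div_le_div_of_nonneg_left hL (by linarith) (by linarith))
  refine ⟨J / (2 ^ (-c) * B) * (n ^ (α + 1) * Gamma (n + (γ + 1)) / Gamma (n + (γ + 1) + (α + 1)))
    - 1, ?_, (abs_mul_sub_one_le (by linarith) hL hK hJB (hΓ n hn)).trans
      (div_le_div_of_nonneg_right (by linarith) (by linarith))⟩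
  have hB : B = Gamma (α + 1) * Gamma (n + (γ + 1)) / Gamma (n + (γ + 1) + (α + 1)) :=
    (integral_rpow_mul_one_sub_rpow hα (by linarith)).trans (by ring_nf)
  have h2 : (2:ℝ) ^ (γ + β + 1) = 2 ^ c / 2 ^ (α + 1) := by
    rw [← rpow_sub two_pos]; congr 1; ring
  rw [add_sub_cancel, hB, h2, rpow_neg zero_le_two,
    show -α - 1 = -(α + 1) by ring, rpow_neg (by positivity), mul_rpow zero_le_two (by positivity)]
  have := Gamma_pos_of_pos (by linarith : 0 < α + 1)
  have := Gamma_pos_of_pos (by linarith : (0:ℝ) < n + (γ + 1))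
  have := Gamma_pos_of_pos (by linarith : (0:ℝ) < n + (γ + 1) + (α + 1))
  field_simp
end

section
/- Suppose α > −1, γ > −1, β ∈ ℝ, and g : [0,1] → ℝ is continuous and satisfies |g(t) − g(0)| ≤ C t for all 0 ≤ t ≤ 1 and some constant C. Then there exists a constant C′ > 0 such that for every integer n ≥ 2, |∫₀¹ t^α (1−t)^{n+γ} (1+t)^{β−n} g(t) dt − (2n)^{−α−1} g(0) Γ(α+1)| ≤ C′ n^{−α−2}. -/
/-! With `ψₓ(t) = (1 - t) ^ (x + γ) * (1 + t) ^ (β - x)` one has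
`log ψₓ(t) = -2xt + O(x t² + t)` near `0`, and `ψₓ(t) ≤ exp (-x t / 2)` on `(0, 1)` once `x ≥ 2`
and `x ≥ β`. Together with `g t = g 0 + O(t)` this shows that on `(0, 1)` the integrand differs
from `g 0 * t ^ α * exp (-2 x t)` by `O(t ^ (α + 1) * (1 + x t) * exp (-x t / 4))`, a majorant
that also dominates `g 0 * t ^ α * exp (-2 x t)` on `[1, ∞)`. Integrating over `(0, ∞)`, the
comparison function gives exactly `g 0 * Γ(α + 1) * (2x) ^ (-α - 1)` and the majorant gives
`O(x ^ (-α - 2))`, both by Euler's integral for `Γ`. The finitely many small `n` only enlarge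
the constant. -/

open Real MeasureTheory Set Filter Asymptotics

theorem abs_exp_sub_one_le_mul_exp_abs (x : ℝ) : |exp x - 1| ≤ |x| * exp |x| := by
  rcases le_or_gt 0 x with hx | hx
  · rw [abs_of_nonneg hx, abs_of_nonneg (by linarith [one_le_exp hx])]
    have h := mul_le_mul_of_nonneg_right (add_one_le_exp (-x)) (exp_pos x).le
    rw [← exp_add, neg_add_cancel, exp_zero] at h
    nlinarith
  · rw [abs_of_neg hx, abs_of_nonpos (by linarith [exp_lt_one_iff.2 hx])]
    nlinarith [add_one_le_exp x, one_le_exp (by linarith : (0:ℝ) ≤ -x)]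

theorem abs_log_one_sub_add_self_le {t : ℝ} (ht : |t| ≤ 1 / 2) :
    |log (1 - t) + t| ≤ 2 * t ^ 2 := by
  have h := abs_log_sub_add_sum_range_le (x := t) (by linarith) 1
  simp only [Finset.range_one, Finset.sum_singleton, zero_add, pow_one, Nat.cast_zero,
    div_one, one_add_one_eq_two, sq_abs] at h
  rw [add_comm]
  calc _ ≤ t ^ 2 / (1 - |t|) := h
    _ ≤ t ^ 2 / (1 / 2) := by gcongr; linarith
    _ = 2 * t ^ 2 := by ring

theorem one_sub_rpow_mul_one_add_rpow_le_exp {t a b : ℝ} (ht₀ : 0 ≤ t) (ht₁ : t ≤ 1)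
    (ha : 0 ≤ a) (hb : b ≤ 0) : (1 - t) ^ a * (1 + t) ^ b ≤ exp (-(a * t)) :=
  calc (1 - t) ^ a * (1 + t) ^ b ≤ (1 - t) ^ a * 1 :=
        mul_le_mul_of_nonneg_left (rpow_le_one_of_one_le_of_nonpos (by linarith) hb)
          (rpow_nonneg (by linarith) _)
    _ ≤ exp (-t) ^ a := by
        rw [mul_one]; exact rpow_le_rpow (by linarith) (one_sub_le_exp_neg t) ha
    _ = exp (-(a * t)) := by rw [← exp_mul]; ring_nf

theorem one_sub_rpow_mul_one_add_rpow_le_exp_neg_half {x γ β t : ℝ} (hγ : -1 < γ) (hx : 2 ≤ x)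
    (hβ : β ≤ x) (ht₀ : 0 ≤ t) (ht₁ : t ≤ 1) :
    (1 - t) ^ (x + γ) * (1 + t) ^ (β - x) ≤ exp (-(x / 2 * t)) :=
  (one_sub_rpow_mul_one_add_rpow_le_exp ht₀ ht₁ (by linarith) (by linarith)).trans
    (exp_le_exp.2 (by nlinarith))

theorem abs_one_sub_rpow_mul_one_add_rpow_sub_exp_le {x γ β t : ℝ} (hx : 0 ≤ x)
    (ht₀ : 0 ≤ t) (ht : t ≤ 1 / 4) :
    |(1 - t) ^ (x + γ) * (1 + t) ^ (β - x) - exp (-(2 * x * t))|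
      ≤ exp (2 * (|γ| + |β|)) * (4 * x * t ^ 2 + 2 * (|γ| + |β|) * t) * exp (-(x * t)) := by
  set c := 2 * (|γ| + |β|)
  have hL₁ : |log (1 - t) + t| ≤ 2 * t ^ 2 :=
    abs_log_one_sub_add_self_le (by rw [abs_of_nonneg ht₀]; linarith)
  have hL₂ : |log (1 + t) - t| ≤ 2 * t ^ 2 := by
    simpa [sub_eq_add_neg] using abs_log_one_sub_add_self_le (t := -t)
      (by rw [abs_neg, abs_of_nonneg ht₀]; linarith)
  have ht_sq : 2 * t ^ 2 ≤ t := by nlinarith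
  have hlog₁ : |log (1 - t)| ≤ 2 * t := by
    have := abs_sub (log (1 - t) + t) t
    rw [add_sub_cancel_right, abs_of_nonneg ht₀] at this
    linarith
  have hlog₂ : |log (1 + t)| ≤ 2 * t := by
    have := abs_add_le (log (1 + t) - t) t
    rw [sub_add_cancel, abs_of_nonneg ht₀] at this
    linarith
  -- `Δ` is the logarithm of `(1 - t) ^ (x + γ) * (1 + t) ^ (β - x) / exp (-(2 * x * t))`.
  set Δ := x * ((log (1 - t) + t) - (log (1 + t) - t)) + γ * log (1 - t) + β * log (1 + t)
  have hΔ : |Δ| ≤ 4 * x * t ^ 2 + c * t :=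
    calc |Δ| ≤ x * (|log (1 - t) + t| + |log (1 + t) - t|) + |γ| * |log (1 - t)|
          + |β| * |log (1 + t)| := by
          refine (abs_add_le _ _).trans (add_le_add ((abs_add_le _ _).trans ?_) (abs_mul _ _).le)
          rw [abs_mul, abs_mul, abs_of_nonneg hx]
          gcongr
          exact abs_sub _ _
      _ ≤ x * (2 * t ^ 2 + 2 * t ^ 2) + |γ| * (2 * t) + |β| * (2 * t) := by gcongr
      _ = 4 * x * t ^ 2 + c * t := by ring
  have hΔ_le : |Δ| ≤ x * t + c := by
    have : c * t ≤ c := mul_le_of_le_one_right (by positivity) (by linarith)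
    nlinarith [mul_le_mul_of_nonneg_left ht (mul_nonneg hx ht₀)]
  have hψ : (1 - t) ^ (x + γ) * (1 + t) ^ (β - x) = exp (-(2 * x * t)) * exp Δ := by
    rw [rpow_def_of_pos (by linarith), rpow_def_of_pos (by linarith), ← exp_add, ← exp_add]
    congr 1
    ring
  calc |(1 - t) ^ (x + γ) * (1 + t) ^ (β - x) - exp (-(2 * x * t))|
      = exp (-(2 * x * t)) * |exp Δ - 1| := by
        rw [hψ, ← mul_sub_one, abs_mul, abs_of_pos (exp_pos _)]
    _ ≤ exp (-(2 * x * t)) * ((4 * x * t ^ 2 + c * t) * exp (x * t + c)) := by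
        gcongr
        exact (abs_exp_sub_one_le_mul_exp_abs Δ).trans (by gcongr)
    _ = exp c * (4 * x * t ^ 2 + c * t) * exp (-(x * t)) := by
        rw [mul_left_comm, ← exp_add, show -(2 * x * t) + (x * t + c) = c + -(x * t) by ring,
          exp_add]
        ring

theorem exists_abs_one_sub_rpow_mul_one_add_rpow_sub_exp_le {γ : ℝ} (hγ : -1 < γ) (β : ℝ) :
    ∃ A ≥ 1, ∀ x, 2 ≤ x → β ≤ x → ∀ t ∈ Ioo (0 : ℝ) 1,
      |(1 - t) ^ (x + γ) * (1 + t) ^ (β - x) - exp (-(2 * x * t))|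
        ≤ A * (t * (1 + x * t)) * exp (-(x / 4 * t)) := by
  set c := 2 * (|γ| + |β|)
  have hc : 0 ≤ c := by positivity
  refine ⟨(4 + c) * exp c + 16, by nlinarith [exp_pos c], fun x hx hβ t ⟨ht₀, ht₁⟩ ↦ ?_⟩
  have hx₀ : 0 ≤ x := by linarith
  rcases le_or_gt t (1 / 4) with ht | ht
  · calc _ ≤ exp c * (4 * x * t ^ 2 + c * t) * exp (-(x * t)) :=
          abs_one_sub_rpow_mul_one_add_rpow_sub_exp_le hx₀ ht₀.le ht
      _ ≤ exp c * ((4 + c) * (t * (1 + x * t))) * exp (-(x / 4 * t)) := by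
          gcongr
          · nlinarith [mul_nonneg hc ht₀.le, mul_nonneg hc (mul_nonneg hx₀ (sq_nonneg t))]
          · nlinarith
      _ ≤ ((4 + c) * exp c + 16) * (t * (1 + x * t)) * exp (-(x / 4 * t)) := by
          have : 0 ≤ t * (1 + x * t) * exp (-(x / 4 * t)) := by positivity
          nlinarith
  · have hψ₀ : 0 ≤ (1 - t) ^ (x + γ) * (1 + t) ^ (β - x) :=
      mul_nonneg (rpow_nonneg (by linarith) _) (rpow_nonneg (by linarith) _)
    have hψ := one_sub_rpow_mul_one_add_rpow_le_exp_neg_half hγ hx hβ ht₀.le ht₁.le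
    have he : exp (-(2 * x * t)) ≤ exp (-(x / 2 * t)) := exp_le_exp.2 (by nlinarith)
    calc _ ≤ exp (-(x / 2 * t)) :=
          abs_sub_le_iff.2 ⟨by linarith [exp_pos (-(2 * x * t))], by linarith⟩
      _ ≤ 1 * exp (-(x / 4 * t)) := by rw [one_mul]; exact exp_le_exp.2 (by nlinarith)
      _ ≤ 16 * (t * (1 + x * t)) * exp (-(x / 4 * t)) := by
          gcongr; nlinarith [mul_nonneg (mul_nonneg hx₀ ht₀.le) ht₀.le]
      _ ≤ ((4 + c) * exp c + 16) * (t * (1 + x * t)) * exp (-(x / 4 * t)) := by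
          gcongr; exact le_add_of_nonneg_left (by positivity)

theorem integrableOn_rpow_mul_exp_neg_mul_Ioi {s b : ℝ} (hs : -1 < s) (hb : 0 < b) :
    IntegrableOn (fun t : ℝ ↦ t ^ s * exp (-(b * t))) (Ioi 0) := by
  simpa only [rpow_one, neg_mul] using integrableOn_rpow_mul_exp_neg_mul_rpow hs one_pos hb

theorem integral_rpow_mul_exp_neg_mul_Ioi_eq_Gamma {s b : ℝ} (hs : -1 < s) (hb : 0 < b) :
    ∫ t in Ioi 0, t ^ s * exp (-(b * t)) = Gamma (s + 1) * b ^ (-s - 1) := by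
  have h := integral_rpow_mul_exp_neg_mul_Ioi (a := s + 1) (by linarith) hb
  rw [add_sub_cancel_right] at h
  rw [h, mul_comm, one_div, inv_rpow hb.le, ← rpow_neg hb.le, neg_add']

theorem eqOn_rpow_mul_one_add_mul_mul_exp_neg (s x b : ℝ) :
    EqOn (fun t ↦ t ^ s * (1 + x * t) * exp (-(b * t)))
      (fun t ↦ t ^ s * exp (-(b * t)) + x * (t ^ (s + 1) * exp (-(b * t)))) (Ioi 0) := by
  intro t ht
  simp only
  rw [rpow_add_one (ne_of_gt ht)]
  ring

theorem integrableOn_rpow_mul_one_add_mul_mul_exp_neg_Ioi {s b : ℝ} (hs : -1 < s) (hb : 0 < b)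
    (x : ℝ) : IntegrableOn (fun t ↦ t ^ s * (1 + x * t) * exp (-(b * t))) (Ioi 0) :=
  ((integrableOn_rpow_mul_exp_neg_mul_Ioi hs hb).add
    ((integrableOn_rpow_mul_exp_neg_mul_Ioi (by linarith) hb).const_mul x)).congr_fun
    (eqOn_rpow_mul_one_add_mul_mul_exp_neg s x b).symm measurableSet_Ioi

theorem integral_rpow_mul_one_add_mul_mul_exp_neg_Ioi {s x : ℝ} (hs : -1 < s) (hx : 0 < x) :
    ∫ t in Ioi 0, t ^ s * (1 + x * t) * exp (-(x / 4 * t))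
      = 4 ^ (s + 1) * (Gamma (s + 1) + 4 * Gamma (s + 2)) * x ^ (-s - 1) := by
  have hx4 : 0 < x / 4 := by positivity
  rw [setIntegral_congr_fun measurableSet_Ioi (eqOn_rpow_mul_one_add_mul_mul_exp_neg s x _),
    integral_add (integrableOn_rpow_mul_exp_neg_mul_Ioi hs hx4)
      ((integrableOn_rpow_mul_exp_neg_mul_Ioi (by linarith) hx4).const_mul x),
    integral_const_mul, integral_rpow_mul_exp_neg_mul_Ioi_eq_Gamma hs hx4,
    integral_rpow_mul_exp_neg_mul_Ioi_eq_Gamma (by linarith) hx4]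
  have hx_eq : x * (x / 4) ^ (-(s + 1) - 1) = 4 * (x / 4) ^ (-s - 1) := by
    rw [show -s - 1 = (-(s + 1) - 1) + 1 by ring, rpow_add_one hx4.ne']
    ring
  have h4 : (x / 4) ^ (-s - 1) = 4 ^ (s + 1) * x ^ (-s - 1) := by
    rw [div_rpow hx.le (by norm_num), show -s - 1 = -(s + 1) by ring,
      rpow_neg (by norm_num : (0 : ℝ) ≤ 4)]
    field_simp
  rw [mul_left_comm, hx_eq, show s + 1 + 1 = s + 2 by ring, h4]
  ring

theorem abs_setIntegral_sub_setIntegral_le {X : Type*} [MeasurableSpace X] {μ : Measure X}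
    {s t : Set X} (hs : MeasurableSet s) (ht : MeasurableSet t) (hst : s ⊆ t)
    {F G B : X → ℝ} (hF : AEStronglyMeasurable F (μ.restrict s))
    (hG : IntegrableOn G t μ) (hB : IntegrableOn B t μ)
    (hFG : ∀ x ∈ s, |F x - G x| ≤ B x) (hGB : ∀ x ∈ t \ s, |G x| ≤ B x) :
    |∫ x in s, F x ∂μ - ∫ x in t, G x ∂μ| ≤ ∫ x in t, B x ∂μ := by
  have hFs : IntegrableOn F s μ := by
    refine Integrable.mono' ((hG.mono_set hst).abs.add (hB.mono_set hst)) hF ?_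
    filter_upwards [ae_restrict_mem hs] with x hx
    have := hFG x hx
    have := abs_sub_abs_le_abs_sub (F x) (G x)
    show |F x| ≤ |G x| + B x
    linarith
  have hFind : ∫ x in s, F x ∂μ = ∫ x in t, s.indicator F x ∂μ := by
    rw [setIntegral_indicator hs, inter_eq_right.mpr hst]
  rw [hFind, ← integral_sub (hFs.integrable_indicator hs).integrableOn hG, ← Real.norm_eq_abs]
  refine norm_integral_le_of_norm_le hB ?_
  filter_upwards [ae_restrict_mem ht] with x hx
  by_cases hxs : x ∈ s
  · simpa [hxs] using hFG x hxs
  · simpa [hxs] using hGB x ⟨hx, hxs⟩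

theorem continuousOn_integrand {α a b : ℝ} {g : ℝ → ℝ} (hg : ContinuousOn g (Icc 0 1)) :
    ContinuousOn (fun t ↦ t ^ α * (1 - t) ^ a * (1 + t) ^ b * g t) (Ioo 0 1) := by
  refine ((ContinuousOn.mul ?_ ?_).mul ?_).mul (hg.mono Ioo_subset_Icc_self) <;>
    refine ContinuousOn.rpow_const (by fun_prop) fun t ht ↦ Or.inl ?_ <;>
    linarith [ht.1, ht.2]

theorem abs_integrand_sub_le {α γ β C A x t : ℝ} {g : ℝ → ℝ} (hγ : -1 < γ) (hx : 2 ≤ x)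
    (hβ : β ≤ x) (ht : t ∈ Ioo (0 : ℝ) 1) (hgt : |g t - g 0| ≤ C * t)
    (hA : |(1 - t) ^ (x + γ) * (1 + t) ^ (β - x) - exp (-(2 * x * t))|
      ≤ A * (t * (1 + x * t)) * exp (-(x / 4 * t))) :
    |t ^ α * (1 - t) ^ (x + γ) * (1 + t) ^ (β - x) * g t - g 0 * (t ^ α * exp (-(2 * x * t)))|
      ≤ (|C| + |g 0| * A) * (t ^ (α + 1) * (1 + x * t) * exp (-(x / 4 * t))) := by
  obtain ⟨ht₀, ht₁⟩ := ht
  set ψ := (1 - t) ^ (x + γ) * (1 + t) ^ (β - x)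
  have hψ₀ : 0 ≤ ψ := mul_nonneg (rpow_nonneg (by linarith) _) (rpow_nonneg (by linarith) _)
  have hψ := one_sub_rpow_mul_one_add_rpow_le_exp_neg_half hγ hx hβ ht₀.le ht₁.le
  have htα : 0 ≤ t ^ α := rpow_nonneg ht₀.le α
  have hdiff : |t ^ α * ψ * (g t - g 0)|
      ≤ |C| * (t ^ (α + 1) * (1 + x * t) * exp (-(x / 4 * t))) := by
    rw [abs_mul, abs_of_nonneg (mul_nonneg htα hψ₀), rpow_add_one ht₀.ne']
    calc t ^ α * ψ * |g t - g 0| ≤ t ^ α * exp (-(x / 2 * t)) * (|C| * t) := by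
          gcongr
          exact hgt.trans (by gcongr; exact le_abs_self C)
      _ = |C| * (t ^ α * t * 1 * exp (-(x / 2 * t))) := by ring
      _ ≤ |C| * (t ^ α * t * (1 + x * t) * exp (-(x / 4 * t))) := by
          gcongr
          · nlinarith
          · nlinarith
  have hkernel : |g 0 * (t ^ α * (ψ - exp (-(2 * x * t))))|
      ≤ |g 0| * A * (t ^ (α + 1) * (1 + x * t) * exp (-(x / 4 * t))) := by
    rw [abs_mul, abs_mul, abs_of_nonneg htα, rpow_add_one ht₀.ne']
    calc |g 0| * (t ^ α * |ψ - exp (-(2 * x * t))|)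
        ≤ |g 0| * (t ^ α * (A * (t * (1 + x * t)) * exp (-(x / 4 * t)))) := by gcongr
      _ = _ := by ring
  calc _ = |t ^ α * ψ * (g t - g 0) + g 0 * (t ^ α * (ψ - exp (-(2 * x * t))))| := by
        simp only [ψ]; ring_nf
    _ ≤ _ := (abs_add_le _ _).trans (add_le_add hdiff hkernel)
    _ = _ := by ring

theorem rpow_mul_exp_neg_le_of_one_le {α x t : ℝ} (hx : 0 ≤ x) (ht : 1 ≤ t) :
    t ^ α * exp (-(2 * x * t)) ≤ t ^ (α + 1) * (1 + x * t) * exp (-(x / 4 * t)) := by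
  rw [rpow_add_one (by linarith)]
  have : 0 ≤ x * t := by nlinarith
  have : t ^ α ≤ t ^ α * t * (1 + x * t) := by
    have := rpow_nonneg (by linarith : (0 : ℝ) ≤ t) α
    nlinarith [mul_le_mul ht (by linarith : (1 : ℝ) ≤ 1 + x * t) zero_le_one (by linarith)]
  gcongr
  nlinarith

theorem exists_abs_integral_sub_le {α γ β C : ℝ} (hα : -1 < α) (hγ : -1 < γ) {g : ℝ → ℝ}
    (hg : ContinuousOn g (Icc 0 1)) (hgC : ∀ t ∈ Icc (0 : ℝ) 1, |g t - g 0| ≤ C * t) :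
    ∃ D, ∀ x : ℝ, 2 ≤ x → β ≤ x →
      |(∫ t in Ioo (0 : ℝ) 1, t ^ α * (1 - t) ^ (x + γ) * (1 + t) ^ (β - x) * g t)
        - (2 * x) ^ (-α - 1) * g 0 * Gamma (α + 1)| ≤ D * x ^ (-α - 2) := by
  obtain ⟨A, hA₁, hA⟩ := exists_abs_one_sub_rpow_mul_one_add_rpow_sub_exp_le hγ β
  set K := |C| + |g 0| * A
  refine ⟨K * (4 ^ (α + 2) * (Gamma (α + 2) + 4 * Gamma (α + 3))), fun x hx hβ ↦ ?_⟩
  have hx₀ : 0 < x := by linarith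
  have hcompare : ∫ t in Ioi 0, g 0 * (t ^ α * exp (-(2 * x * t)))
      = (2 * x) ^ (-α - 1) * g 0 * Gamma (α + 1) := by
    rw [integral_const_mul, integral_rpow_mul_exp_neg_mul_Ioi_eq_Gamma hα (by positivity)]
    ring
  have hmajorant : ∫ t in Ioi 0, K * (t ^ (α + 1) * (1 + x * t) * exp (-(x / 4 * t)))
      = K * (4 ^ (α + 2) * (Gamma (α + 2) + 4 * Gamma (α + 3))) * x ^ (-α - 2) := by
    rw [integral_const_mul, integral_rpow_mul_one_add_mul_mul_exp_neg_Ioi (by linarith) hx₀,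
      show α + 1 + 1 = α + 2 by ring, show α + 1 + 2 = α + 3 by ring,
      show -(α + 1) - 1 = -α - 2 by ring]
    ring
  rw [← hcompare, ← hmajorant]
  refine abs_setIntegral_sub_setIntegral_le measurableSet_Ioo measurableSet_Ioi
    Ioo_subset_Ioi_self ((continuousOn_integrand hg).aestronglyMeasurable measurableSet_Ioo)
    ?_ ?_ (fun t ht ↦ ?_) (fun t ⟨ht₀, ht⟩ ↦ ?_)
  · exact (integrableOn_rpow_mul_exp_neg_mul_Ioi hα (by positivity)).const_mul _
  · exact (integrableOn_rpow_mul_one_add_mul_mul_exp_neg_Ioi (by linarith) (by positivity)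
      x).const_mul _
  · exact abs_integrand_sub_le hγ hx hβ ht (hgC t (Ioo_subset_Icc_self ht)) (hA x hx hβ t ht)
  · have ht₁ : 1 ≤ t := by
      by_contra! h
      exact ht ⟨ht₀, h⟩
    rw [abs_mul, abs_of_nonneg (mul_nonneg (rpow_nonneg ht₀.le α) (exp_pos _).le)]
    have hK : |g 0| ≤ K := by
      show |g 0| ≤ |C| + |g 0| * A
      nlinarith [abs_nonneg C, abs_nonneg (g 0)]
    exact mul_le_mul hK (rpow_mul_exp_neg_le_of_one_le hx₀.le ht₁) (by positivity)
      ((abs_nonneg _).trans hK)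

/-- If g is continuous on [0,1] with |g(t) − g(0)| ≤ C t, then there is C′ > 0 with
|∫₀¹ t^α (1−t)^{n+γ} (1+t)^{β−n} g(t) dt − (2n)^{−α−1} g(0) Γ(α+1)| ≤ C′ n^{−α−2} for all n ≥ 2. -/
theorem statement1 (α γ β C : ℝ) (hα : α > -1) (hγ : γ > -1)
    (g : ℝ → ℝ) (hg : ContinuousOn g (Set.Icc 0 1))
    (hgC : ∀ t ∈ Set.Icc (0:ℝ) 1, |g t - g 0| ≤ C * t) :
    ∃ C' : ℝ, C' > 0 ∧ ∀ n : ℕ, 2 ≤ n →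
      |(∫ t in Set.Ioo (0:ℝ) 1,
          t ^ α * (1 - t) ^ ((n : ℝ) + γ) * (1 + t) ^ (β - (n : ℝ)) * g t)
        - (2 * (n : ℝ)) ^ (-α - 1) * g 0 * Real.Gamma (α + 1)|
        ≤ C' * (n : ℝ) ^ (-α - 2) := by
  obtain ⟨D, hD⟩ := exists_abs_integral_sub_le (β := β) hα hγ hg hgC
  have hO : (fun n : ℕ ↦ (∫ t in Ioo (0 : ℝ) 1,
        t ^ α * (1 - t) ^ ((n : ℝ) + γ) * (1 + t) ^ (β - (n : ℝ)) * g t)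
        - (2 * (n : ℝ)) ^ (-α - 1) * g 0 * Gamma (α + 1))
      =O[atTop] fun n : ℕ ↦ (n : ℝ) ^ (-α - 2) := by
    refine IsBigO.of_bound D ?_
    filter_upwards [tendsto_natCast_atTop_atTop.eventually_ge_atTop (max 2 β)] with n hn
    rw [Real.norm_eq_abs, Real.norm_eq_abs, abs_of_nonneg (a := (n : ℝ) ^ (-α - 2))
      (by positivity)]
    exact hD n (le_of_max_le_left hn) (le_of_max_le_right hn)
  obtain ⟨C', hC', hbound⟩ := bound_of_isBigO_nat_atTop hO
  refine ⟨C', hC', fun n hn ↦ ?_⟩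
  have hpos : 0 < (n : ℝ) ^ (-α - 2) := rpow_pos_of_pos (by positivity) _
  simpa [abs_of_pos hpos] using hbound hpos.ne'
end

section
/- Suppose 0 < a < 1, −1 < b < 0 and c ≥ 0. Then for every n ∈ ℕ, Σ_{i=0}^n (−n)_i (−n−1)_i (c)_i / (i! (−n−a)_i (−n−b−1)_i) ≤ (1+a+b+c)_n / (1+a+b)_n ≤ Σ_{i=0}^n (−n)_i² (c)_i / (i! (−n−a)_i (−n−b)_i). -/
/-- Ascending Pochhammer symbol `(x)_m = ∏_{i=0}^{m-1} (x+i)`. -/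
noncomputable def poch (x : ℝ) (m : ℕ) : ℝ := ∏ i ∈ Finset.range m, (x + i)

/-!
By Chu–Vandermonde, `(1+a+b+c)_n / (1+a+b)_n = ₂F₁(-n, c; -n-a-b; 1)`, a sum of nonnegative
terms. The `i`-th term of each `₃F₂` sum is the `i`-th `₂F₁` term times `∏_{j<i} ρ(j - n)`, where
`ρ(u) = (u-1)(u-a-b) / ((u-a)(u-b-1))` for the lower sum and `ρ(u) = u(u-a-b) / ((u-a)(u-b))` for
the upper one. For `u ≤ -1` all these linear factors are negative, and numerator and denominator
of `ρ(u)` differ by a constant, `b(a-1) > 0` resp. `-ab > 0`; so the first product is at most `1`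
and the second at least `1`, which compares the sums term by term.
-/

open Finset Polynomial

lemma poch_eq_eval_ascPochhammer (x : ℝ) (m : ℕ) : poch x m = (ascPochhammer ℝ m).eval x := by
  induction m with
  | zero => simp [poch]
  | succ m ih => rw [poch, prod_range_succ, ← poch, ih, ascPochhammer_succ_eval]

lemma poch_add (x : ℝ) (i m : ℕ) : poch x (i + m) = poch x i * poch (x + i) m := by
  simp only [poch, prod_range_add, Nat.cast_add, add_assoc]

lemma poch_nonneg {x : ℝ} (hx : 0 ≤ x) (m : ℕ) : 0 ≤ poch x m :=
  prod_nonneg fun _ _ => by positivity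

lemma poch_pos {x : ℝ} (hx : 0 < x) (m : ℕ) : 0 < poch x m :=
  prod_pos fun _ _ => by positivity

lemma poch_mul_poch_eq_prod (x y : ℝ) (i : ℕ) :
    poch x i * poch y i = ∏ j ∈ range i, (x + j) * (y + j) :=
  prod_mul_distrib.symm

lemma poch_neg (x : ℝ) (m : ℕ) : poch (-x) m = (-1) ^ m * (descPochhammer ℝ m).eval x := by
  rw [poch_eq_eval_ascPochhammer, ascPochhammer_eval_neg_eq_descPochhammer]

lemma poch_neg_sub_add_one (x : ℝ) (m : ℕ) : poch (-x - m + 1) m = (-1) ^ m * poch x m := by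
  rw [show -x - m + 1 = -(x + m - 1) by ring, poch_neg, descPochhammer_eval_eq_ascPochhammer,
    poch_eq_eval_ascPochhammer, show x + m - 1 - m + 1 = x by ring]

lemma poch_neg_natCast (n i : ℕ) : poch (-n) i = (-1) ^ i * (i.factorial * n.choose i) := by
  rw [poch_neg, descPochhammer_eval_eq_descFactorial, Nat.descFactorial_eq_factorial_mul_choose,
    Nat.cast_mul]

lemma descPochhammer_smeval_eq_poch (r : ℝ) (m : ℕ) :
    (descPochhammer ℤ m).smeval r = poch (r - m + 1) m := by
  rw [descPochhammer_smeval_eq_ascPochhammer, ascPochhammer_smeval_eq_eval,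
    poch_eq_eval_ascPochhammer]

/-- Chu–Vandermonde, from the falling-factorial binomial theorem at `r = -c`, `s = d + n - 1`. -/
lemma sum_choose_mul_poch_mul_poch (c d : ℝ) (n : ℕ) :
    ∑ i ∈ range (n + 1), (n.choose i : ℝ) * ((-1) ^ i * poch c i) * poch (d + i) (n - i)
      = poch (d - c) n := by
  have h := Ring.descPochhammer_smeval_add (r := -c) (s := d + n - 1) n (Commute.all _ _)
  rw [Nat.sum_antidiagonal_eq_sum_range_succ_mk] at h
  rw [descPochhammer_smeval_eq_poch, show -c + (d + n - 1) - n + 1 = d - c by ring] at h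
  rw [h]
  refine sum_congr rfl fun i hi => ?_
  have hi : i ≤ n := mem_range_succ_iff.mp hi
  rw [descPochhammer_smeval_eq_poch, descPochhammer_smeval_eq_poch, poch_neg_sub_add_one,
    Nat.cast_sub hi, show d + n - 1 - (n - i : ℝ) + 1 = d + i by ring, mul_assoc]

lemma sum_poch_neg_natCast_mul_poch_div (c d : ℝ) (n : ℕ) (hd : poch d n ≠ 0) :
    ∑ i ∈ range (n + 1), poch (-n) i * poch c i / (i.factorial * poch d i)
      = poch (d - c) n / poch d n := by
  rw [← sum_choose_mul_poch_mul_poch, sum_div]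
  refine sum_congr rfl fun i hi => ?_
  have hsplit : poch d n = poch d i * poch (d + i) (n - i) := by
    rw [← poch_add, Nat.add_sub_cancel' (mem_range_succ_iff.mp hi)]
  rw [hsplit] at hd ⊢
  rw [poch_neg_natCast]
  field_simp [left_ne_zero_of_mul hd, right_ne_zero_of_mul hd]

lemma natCast_add_one_le_of_mem_range {i j n : ℕ} (hj : j ∈ range i) (hi : i ≤ n) :
    (j : ℝ) + 1 ≤ n := by
  exact_mod_cast (mem_range.mp hj).trans_le hi

section Terms

variable {a b c : ℝ} {n i : ℕ}

lemma chuVandermonde_term_nonneg {d : ℝ} (hc : 0 ≤ c) (hd : d + n < 1) (hi : i ≤ n) :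
    0 ≤ poch (-n) i * poch c i / (i.factorial * poch d i) := by
  rw [mul_comm (i.factorial : ℝ), mul_div_mul_comm, poch, poch, ← prod_div_distrib]
  refine mul_nonneg (prod_nonneg fun j hj => ?_) (div_nonneg (poch_nonneg hc i) (by positivity))
  have hj := natCast_add_one_le_of_mem_range hj hi
  exact div_nonneg_of_nonpos (by linarith) (by linarith)

lemma term_le_chuVandermonde_term (ha0 : 0 < a) (ha1 : a < 1) (hb0 : -1 < b) (hb1 : b < 0)
    (hc : 0 ≤ c) (hi : i ≤ n) :
    poch (-n) i * poch (-n - 1) i * poch c i /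
        (i.factorial * poch (-n - a) i * poch (-n - b - 1) i)
      ≤ poch (-n) i * poch c i / (i.factorial * poch (-n - a - b) i) := by
  have hu : ∀ j ∈ range i, (j : ℝ) + 1 ≤ n := fun _ hj => natCast_add_one_le_of_mem_range hj hi
  have hden : 0 < poch (-n - a) i * poch (-n - b - 1) i := by
    rw [poch_mul_poch_eq_prod]
    exact prod_pos fun j hj => mul_pos_of_neg_of_neg (by linarith [hu j hj]) (by linarith [hu j hj])
  have hcross : poch (-n - 1) i * poch (-n - a - b) i ≤ poch (-n - a) i * poch (-n - b - 1) i := by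
    rw [poch_mul_poch_eq_prod, poch_mul_poch_eq_prod]
    refine prod_le_prod (fun j hj => ?_) (fun j _ => ?_)
    · exact mul_nonneg_of_nonpos_of_nonpos (by linarith [hu j hj]) (by linarith [hu j hj])
    · nlinarith [mul_pos_of_neg_of_neg hb1 (sub_neg.2 ha1)]
  have hD : poch (-n - a - b) i ≠ 0 :=
    prod_ne_zero_iff.2 fun j hj => by linarith [hu j hj]
  calc _ = poch (-n) i * poch c i / (i.factorial * poch (-n - a - b) i) *
        (poch (-n - 1) i * poch (-n - a - b) i / (poch (-n - a) i * poch (-n - b - 1) i)) := by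
        field_simp
    _ ≤ _ := mul_le_of_le_one_right
        (chuVandermonde_term_nonneg hc (by linarith) hi)
        ((div_le_one hden).2 hcross)

lemma chuVandermonde_term_le_term (ha0 : 0 < a) (hb0 : -1 < b) (hb1 : b < 0) (hc : 0 ≤ c)
    (hi : i ≤ n) :
    poch (-n) i * poch c i / (i.factorial * poch (-n - a - b) i)
      ≤ poch (-n) i ^ 2 * poch c i / (i.factorial * poch (-n - a) i * poch (-n - b) i) := by
  have hu : ∀ j ∈ range i, (j : ℝ) + 1 ≤ n := fun _ hj => natCast_add_one_le_of_mem_range hj hi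
  have hden : 0 < poch (-n - a) i * poch (-n - b) i := by
    rw [poch_mul_poch_eq_prod]
    exact prod_pos fun j hj => mul_pos_of_neg_of_neg (by linarith [hu j hj]) (by linarith [hu j hj])
  have hcross : poch (-n - a) i * poch (-n - b) i ≤ poch (-n) i * poch (-n - a - b) i := by
    rw [poch_mul_poch_eq_prod, poch_mul_poch_eq_prod]
    refine prod_le_prod (fun j hj => ?_) (fun j _ => ?_)
    · exact mul_nonneg_of_nonpos_of_nonpos (by linarith [hu j hj]) (by linarith [hu j hj])
    · nlinarith [mul_neg_of_pos_of_neg ha0 hb1]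
  have hD : poch (-n - a - b) i ≠ 0 :=
    prod_ne_zero_iff.2 fun j hj => by linarith [hu j hj]
  calc _ ≤ poch (-n) i * poch c i / (i.factorial * poch (-n - a - b) i) *
        (poch (-n) i * poch (-n - a - b) i / (poch (-n - a) i * poch (-n - b) i)) :=
        le_mul_of_one_le_right
          (chuVandermonde_term_nonneg hc (by linarith) hi)
          ((one_le_div hden).2 hcross)
    _ = _ := by field_simp

end Terms

/-- For 0 < a < 1, −1 < b < 0, c ≥ 0 and every n ∈ ℕ,
₃F₂(−n,−n−1,c;−n−a,−n−b−1;1) ≤ (1+a+b+c)_n/(1+a+b)_n ≤ ₃F₂(−n,−n,c;−n−a,−n−b;1). -/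
theorem statement3 (a b c : ℝ) (ha0 : 0 < a) (ha1 : a < 1) (hb0 : -1 < b) (hb1 : b < 0)
    (hc : 0 ≤ c) (n : ℕ) :
    (∑ i ∈ Finset.range (n + 1),
        poch (-(n:ℝ)) i * poch (-(n:ℝ) - 1) i * poch c i /
          ((i.factorial : ℝ) * poch (-(n:ℝ) - a) i * poch (-(n:ℝ) - b - 1) i))
      ≤ poch (1 + a + b + c) n / poch (1 + a + b) n
    ∧ poch (1 + a + b + c) n / poch (1 + a + b) n
      ≤ ∑ i ∈ Finset.range (n + 1),
          (poch (-(n:ℝ)) i) ^ 2 * poch c i /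
            ((i.factorial : ℝ) * poch (-(n:ℝ) - a) i * poch (-(n:ℝ) - b) i) := by
  have hden : poch (-n - a - b) n = (-1) ^ n * poch (1 + a + b) n := by
    rw [← poch_neg_sub_add_one]; congr 1; ring
  have hnum : poch (-n - a - b - c) n = (-1) ^ n * poch (1 + a + b + c) n := by
    rw [← poch_neg_sub_add_one]; congr 1; ring
  have hsign : ((-1) ^ n : ℝ) ≠ 0 := by simp
  have hmid : poch (1 + a + b + c) n / poch (1 + a + b) n
      = ∑ i ∈ range (n + 1), poch (-n) i * poch c i / (i.factorial * poch (-n - a - b) i) := by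
    rw [sum_poch_neg_natCast_mul_poch_div c _ n
      (hden ▸ mul_ne_zero hsign (poch_pos (by linarith) n).ne'), hden, hnum,
      mul_div_mul_left _ _ hsign]
  rw [hmid]
  refine ⟨sum_le_sum fun i hi => ?_, sum_le_sum fun i hi => ?_⟩
  · exact term_le_chuVandermonde_term ha0 ha1 hb0 hb1 hc (mem_range_succ_iff.mp hi)
  · exact chuVandermonde_term_le_term ha0 hb0 hb1 hc (mem_range_succ_iff.mp hi)
end
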